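/- arXiv:math/0507091 — 3 statements merged into one kernel-verified Lean document; each statement's English description precedes it below -/
import Mathlib

section
/- Let Φ be a cellular automaton and 𝔄 a Φ-invariant subshift with Φ : 𝔄 → 𝔄 bijective. If a ∈ 𝔄~ has an essential defect (i.e. a ∉ 𝔄 and there is no r > 0 and a' ∈ 𝔄 agreeing with a on {z : F_a(z) ≥ r}), then Φ(a) ∉ 𝔄; hence every essential defect is Φ-persistent, i.e. Φ^t(a) ∉ 𝔄 for all t ∈ ℕ. -/
open Topology MeasureTheory

/-- The configuration space `A^(ℤ^D)`, modelled as functions `(Fin D → ℤ) → A`. -/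
abbrev Config (A : Type*) (D : ℕ) := (Fin D → ℤ) → A

/-- Sup-norm of a lattice point `z ∈ ℤ^D`. -/
def normZ {D : ℕ} (z : Fin D → ℤ) : ℕ :=
  Finset.univ.sup fun i => (z i).natAbs

/-- The shift action: `(shift v a) z = a (z + v)`. -/
def shift {A : Type*} {D : ℕ} (v : Fin D → ℤ) (a : Config A D) : Config A D :=
  fun z => a (z + v)

/-- A subshift: a closed, shift-invariant subset of `A^(ℤ^D)`. -/
def IsSubshift {A : Type*} {D : ℕ} [TopologicalSpace A] (S : Set (Config A D)) : Prop :=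
  IsClosed S ∧ ∀ v : Fin D → ℤ, shift v '' S = S

/-- A cellular automaton of radius `r`: shift-commuting and locally determined
with radius `r`. -/
def IsCA {A : Type*} {D : ℕ} (Φ : Config A D → Config A D) (r : ℕ) : Prop :=
  (∀ (v : Fin D → ℤ) (a : Config A D), Φ (shift v a) = shift v (Φ a)) ∧
  ∀ (a b : Config A D) (z : Fin D → ℤ),
    (∀ w, normZ w ≤ r → a (z + w) = b (z + w)) → Φ a z = Φ b z

/-- The defect field `F_a(z)`: the largest radius `r` such that `a` restricted to
the ball `B(z,r)` agrees with (a translate of) some element of `S`. -/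
noncomputable def defectField {A : Type*} {D : ℕ} (S : Set (Config A D))
    (a : Config A D) (z : Fin D → ℤ) : ℕ∞ :=
  ⨆ (r : ℕ) (_ : ∃ b ∈ S, ∀ w, normZ w ≤ r → b (z + w) = a (z + w)), (r : ℕ∞)

/-- `𝔄~` : configurations with unbounded defect field. -/
def tildeSet {A : Type*} {D : ℕ} (S : Set (Config A D)) : Set (Config A D) :=
  {a | (⨆ z, defectField S a z) = ⊤}

/-- `Y_r(a) = { z : F_a(z) ≥ r }`, the non-defective region of range `r`. -/
def Yset {A : Type*} {D : ℕ} (S : Set (Config A D)) (a : Config A D) (r : ℕ) :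
    Set (Fin D → ℤ) :=
  {z | (r : ℕ∞) ≤ defectField S a z}

/-- `y` and `z` are connected by a trail inside `Y` (adjacency = sup-distance 1). -/
def TrailConn {D : ℕ} (Y : Set (Fin D → ℤ)) (y z : Fin D → ℤ) : Prop :=
  y ∈ Y ∧ Relation.ReflTransGen (fun p q => q ∈ Y ∧ normZ (q - p) = 1) y z

/-- A defect of `a` is removable if it can be erased by modifying `a` only near
the defective region. -/
def Removable {A : Type*} {D : ℕ} (S : Set (Config A D)) (a : Config A D) : Prop :=
  ∃ r : ℕ, 0 < r ∧ ∃ a' ∈ S, ∀ z ∈ Yset S a r, a' z = a z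

/-- The trail-connected component of `y` in `Y_r(a)` is projective: it meets
`Y_R(a)` for every `R`. -/
def Projective {A : Type*} {D : ℕ} (S : Set (Config A D)) (a : Config A D)
    (r : ℕ) (y : Fin D → ℤ) : Prop :=
  y ∈ Yset S a r ∧
    ∀ R : ℕ, ∃ w, TrailConn (Yset S a r) y w ∧ (R : ℕ∞) ≤ defectField S a w

/-- `λ^z = λ₁^{z₁} ⋯ λ_D^{z_D}`. -/
noncomputable def prodPow {D : ℕ} (l : Fin D → ℂ) (v : Fin D → ℤ) : ℂ :=
  ∏ i, l i ^ (v i)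

/-- A continuous `(Φ,σ)`-eigenfunction on `S` with generalized eigenvalue `(l0; l)`. -/
def IsEigenFun {A : Type*} {D : ℕ} [TopologicalSpace A] (S : Set (Config A D))
    (Φ : Config A D → Config A D) (l0 : ℂ) (l : Fin D → ℂ)
    (f : Config A D → ℂ) : Prop :=
  ContinuousOn f S ∧ (∃ a ∈ S, f a ≠ 0) ∧
  (∀ a ∈ S, f (Φ a) = l0 * f a) ∧
  ∀ a ∈ S, ∀ v : Fin D → ℤ, f (shift v a) = prodPow l v * f a

/-- The set `Spec(𝔄,Φ,σ)` of generalized eigenvalues (in the torus `𝕋^{D+1}`). -/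
def Spec' {A : Type*} {D : ℕ} [TopologicalSpace A] (S : Set (Config A D))
    (Φ : Config A D → Config A D) : Set (ℂ × (Fin D → ℂ)) :=
  {p | ‖p.1‖ = 1 ∧ (∀ i, ‖p.2 i‖ = 1) ∧
       ∃ f, IsEigenFun S Φ p.1 p.2 f}

/-- A continuous `σ`-eigenfunction on `S`. -/
def IsShiftEigenFun {A : Type*} {D : ℕ} [TopologicalSpace A] (S : Set (Config A D))
    (l : Fin D → ℂ) (f : Config A D → ℂ) : Prop :=
  ContinuousOn f S ∧ (∃ a ∈ S, f a ≠ 0) ∧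
  ∀ a ∈ S, ∀ v : Fin D → ℤ, f (shift v a) = prodPow l v * f a

/-- The group `Spec(𝔄,σ)` of shift eigenvalues. -/
def SpecSigma {A : Type*} {D : ℕ} [TopologicalSpace A] (S : Set (Config A D)) :
    Set (Fin D → ℂ) :=
  {l | (∀ i, ‖l i‖ = 1) ∧ ∃ f, IsShiftEigenFun S l f}

/-- Displacement `γ_{x,z}(λ) = λ^{x−z} f_z(a) / f_x(a)` of a dislocation. -/
noncomputable def disp {A : Type*} {D : ℕ} (l : Fin D → ℂ) (f : Config A D → ℂ)
    (a : Config A D) (x z : Fin D → ℤ) : ℂ :=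
  prodPow l (x - z) * f (shift z a) / f (shift x a)

/-- `C` is comeager relative to the subspace `S`. -/
def ComeagerIn {A : Type*} {D : ℕ} [TopologicalSpace A] (S C : Set (Config A D)) : Prop :=
  {x : S | (x : Config A D) ∈ C} ∈ residual S

/-- An a.e.-continuous (Baire-generically continuous), bounded, a.e.-nonzero
eigenfunction with eigenvalue `(l0; l)`, all equations holding comeagerly. -/
def IsAEEigenFun {A : Type*} {D : ℕ} [TopologicalSpace A] (S : Set (Config A D))
    (Φ : Config A D → Config A D) (l0 : ℂ) (l : Fin D → ℂ)
    (f : Config A D → ℂ) : Prop :=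
  (∃ M : ℝ, ∀ a ∈ S, ‖f a‖ ≤ M) ∧
  ComeagerIn S {a | ContinuousWithinAt f S a} ∧
  (¬ ComeagerIn S {a | f a = 0}) ∧
  ComeagerIn S {a | f (Φ a) = l0 * f a} ∧
  ∀ v : Fin D → ℤ, ComeagerIn S {a | f (shift v a) = prodPow l v * f a}

/-- The set `Spec_ae(𝔄,Φ,σ)` of a.e.-eigenvalues. -/
def SpecAE {A : Type*} {D : ℕ} [TopologicalSpace A] (S : Set (Config A D))
    (Φ : Config A D → Config A D) : Set (ℂ × (Fin D → ℂ)) :=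
  {p | ‖p.1‖ = 1 ∧ (∀ i, ‖p.2 i‖ = 1) ∧
       ∃ f, IsAEEigenFun S Φ p.1 p.2 f}

/-! An injective cellular automaton on a subshift `S` has a local inverse: by compactness of
`S × S` there is a radius `ρ` such that two points of `S` whose images agree on `B(z, ρ)` agree
at `z`. If `Φ a = Φ b` with `b ∈ S`, then at every `z` with `F_a(z) > r + ρ` the configuration `a`
agrees on `B(z, r + ρ)` with some `c ∈ S`, so `Φ c` and `Φ b` agree on `B(z, ρ)` and
`b z = c z = a z`; thus `b` removes the defect of `a`. Each iterate `Φ^[t]`, including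
`Φ^[0] = id`, is again a cellular automaton bijective on `S`. -/

section CellularAutomata

variable {A : Type*} {D : ℕ}

lemma natAbs_le_normZ (u : Fin D → ℤ) (i : Fin D) : (u i).natAbs ≤ normZ u :=
  Finset.le_sup (f := fun j => (u j).natAbs) (Finset.mem_univ i)

lemma normZ_add_le (u v : Fin D → ℤ) : normZ (u + v) ≤ normZ u + normZ v :=
  Finset.sup_le fun i _ => by
    have := Int.natAbs_add_le (u i) (v i)
    have := natAbs_le_normZ u i
    have := natAbs_le_normZ v i
    simp only [Pi.add_apply]
    omega

@[simp]
lemma normZ_zero : normZ (0 : Fin D → ℤ) = 0 := by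
  simp [normZ]

lemma finite_setOf_normZ_le (ρ : ℕ) : {u : Fin D → ℤ | normZ u ≤ ρ}.Finite := by
  refine (Set.finite_Icc (fun _ => -(ρ : ℤ)) fun _ => (ρ : ℤ)).subset fun u hu => ?_
  have hbound := fun i => (natAbs_le_normZ u i).trans hu
  simp only [Set.mem_Icc, Pi.le_def]
  exact ⟨fun i => by have := hbound i; omega, fun i => by have := hbound i; omega⟩

lemma IsSubshift.shift_mem [TopologicalSpace A] {S : Set (Config A D)} (hS : IsSubshift S)
    {b : Config A D} (hb : b ∈ S) (v : Fin D → ℤ) : shift v b ∈ S :=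
  hS.2 v ▸ Set.mem_image_of_mem _ hb

lemma exists_mem_eqOn_ball_of_lt_defectField {S : Set (Config A D)} {a : Config A D}
    {z : Fin D → ℤ} {N : ℕ} (h : (N : ℕ∞) < defectField S a z) :
    ∃ b ∈ S, ∀ w, normZ w ≤ N → b (z + w) = a (z + w) := by
  obtain ⟨R, hR⟩ := lt_iSup_iff.1 h
  obtain ⟨⟨b, hbS, hb⟩, hNR⟩ := lt_iSup_iff.1 hR
  exact ⟨b, hbS, fun w hw => hb w (hw.trans (by exact_mod_cast hNR.le))⟩

lemma IsCA.iterate {Φ : Config A D → Config A D} {r : ℕ} (hΦ : IsCA Φ r) (t : ℕ) :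
    IsCA Φ^[t] (t * r) := by
  induction t with
  | zero => exact ⟨fun _ _ => rfl, fun a b z h => by simpa using h 0 (by simp)⟩
  | succ t ih =>
    refine ⟨fun v a => ?_, fun a b z h => ?_⟩
    · rw [Function.iterate_succ_apply', Function.iterate_succ_apply', ih.1, hΦ.1]
    · rw [Function.iterate_succ_apply', Function.iterate_succ_apply']
      refine hΦ.2 _ _ z fun w hw => ih.2 a b (z + w) fun w' hw' => ?_
      rw [add_assoc]
      refine h (w + w') ?_
      have := normZ_add_le w w'
      rw [add_mul, one_mul]
      omega

variable [TopologicalSpace A] [DiscreteTopology A]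

lemma IsCA.continuous_apply {Φ : Config A D → Config A D} {r : ℕ} (hΦ : IsCA Φ r)
    (z : Fin D → ℤ) : Continuous fun a => Φ a z := by
  refine ((IsLocallyConstant.iff_eventually_eq _).2 fun a => ?_).continuous
  have hnear : ∀ᶠ b in 𝓝 a, ∀ w ∈ {w | normZ w ≤ r}, b (z + w) = a (z + w) :=
    (finite_setOf_normZ_le r).eventually_all.2 fun w _ =>
      (_root_.continuous_apply (z + w)).continuousAt.eventually_mem
        ((isOpen_discrete {a (z + w)}).mem_nhds rfl)
  exact hnear.mono fun b hb => hΦ.2 b a z fun w hw => hb w hw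

lemma IsCA.exists_inverse_radius [Finite A] {Φ : Config A D → Config A D} {r : ℕ}
    (hΦ : IsCA Φ r) {S : Set (Config A D)} (hS : IsSubshift S) (hinj : Set.InjOn Φ S) :
    ∃ ρ : ℕ, ∀ b ∈ S, ∀ c ∈ S, ∀ z,
      (∀ w, normZ w ≤ ρ → Φ b (z + w) = Φ c (z + w)) → b z = c z := by
  let T : Set (Config A D × Config A D) := {p | p.1 ∈ S ∧ p.2 ∈ S ∧ p.1 0 ≠ p.2 0}
  let U (n : ℕ) : Set (Config A D × Config A D) :=
    ⋃ w ∈ {w | normZ w ≤ n}, {p | Φ p.1 w ≠ Φ p.2 w}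
  have hT : IsCompact T := IsClosed.isCompact <|
    (hS.1.preimage continuous_fst).inter <| (hS.1.preimage continuous_snd).inter <|
      (isClosed_discrete {q : A × A | q.1 ≠ q.2}).preimage
        (f := fun p : Config A D × Config A D => (p.1 0, p.2 0)) (by fun_prop)
  have hU (n : ℕ) : IsOpen (U n) := isOpen_biUnion fun w _ =>
    isOpen_ne_fun ((hΦ.continuous_apply w).comp continuous_fst)
      ((hΦ.continuous_apply w).comp continuous_snd)
  have hcover : T ⊆ ⋃ n, U n := by
    rintro ⟨b, c⟩ ⟨hb, hc, hbc⟩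
    obtain ⟨w, hw⟩ := Function.ne_iff.1 fun h => hbc (congrFun (hinj hb hc h) 0)
    exact Set.mem_iUnion.2 ⟨normZ w, Set.mem_iUnion₂.2 ⟨w, le_refl (normZ w), hw⟩⟩
  have hmono : Monotone U := fun m n hmn =>
    Set.biUnion_subset_biUnion_left fun w hw => le_trans hw hmn
  obtain ⟨ρ, hρ⟩ := hT.elim_directed_cover U hU hcover hmono.directed_le
  refine ⟨ρ, fun b hb c hc z hbc => by_contra fun hne => ?_⟩
  have hshift : (shift z b, shift z c) ∈ T :=
    ⟨hS.shift_mem hb z, hS.shift_mem hc z, by simpa [shift] using hne⟩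
  obtain ⟨w, hw, hΦw⟩ := Set.mem_iUnion₂.1 (hρ hshift)
  refine hΦw ?_
  simp only [hΦ.1, shift, add_comm w z]
  exact hbc w hw

lemma IsCA.apply_notMem_of_not_removable [Finite A] {Φ : Config A D → Config A D} {r : ℕ}
    (hΦ : IsCA Φ r) {S : Set (Config A D)} (hS : IsSubshift S) (hinj : Set.InjOn Φ S)
    (hsurj : Set.SurjOn Φ S S) {a : Config A D} (hess : ¬ Removable S a) : Φ a ∉ S := by
  intro hΦa
  obtain ⟨ρ, hρ⟩ := hΦ.exists_inverse_radius hS hinj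
  obtain ⟨b, hbS, hba⟩ := hsurj hΦa
  refine hess ⟨r + ρ + 1, Nat.succ_pos _, b, hbS, fun z hz => ?_⟩
  obtain ⟨c, hcS, hca⟩ := exists_mem_eqOn_ball_of_lt_defectField (N := r + ρ)
    (lt_of_lt_of_le (by exact_mod_cast Nat.lt_succ_self _) hz)
  calc b z = c z := hρ b hbS c hcS z fun w hw => by
        rw [hba]
        refine hΦ.2 a c (z + w) fun w' hw' => ?_
        have := normZ_add_le w w'
        rw [add_assoc, hca (w + w') (by omega)]
    _ = a z := by simpa using hca 0 (by simp)

end CellularAutomata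

theorem essential_defect_persistent_general {A : Type*} {D : ℕ} [Fintype A]
    [TopologicalSpace A] [DiscreteTopology A]
    (Φ : Config A D → Config A D) (r : ℕ) (hΦ : IsCA Φ r)
    (S : Set (Config A D)) (hS : IsSubshift S)
    (himg : Φ '' S = S) (hinj : Set.InjOn Φ S)
    (a : Config A D)
    (hess : ¬ Removable S a) :
    Φ a ∉ S ∧ ∀ t : ℕ, Φ^[t] a ∉ S := by
  have hbij : Set.BijOn Φ S S :=
    ⟨Set.mapsTo_iff_image_subset.2 himg.subset, hinj, himg.superset⟩
  have hpersist (t : ℕ) : Φ^[t] a ∉ S :=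
    (hΦ.iterate t).apply_notMem_of_not_removable hS (hbij.iterate t).injOn
      (hbij.iterate t).surjOn hess
  exact ⟨hpersist 1, hpersist⟩

/-- if `Φ : 𝔄 → 𝔄` is bijective, then any essential defect is
`Φ`-persistent: `Φ(a) ∉ 𝔄`, and indeed `Φ^t(a) ∉ 𝔄` for all `t`. -/
theorem essential_defect_persistent {A : Type*} {D : ℕ} [Fintype A]
    [TopologicalSpace A] [DiscreteTopology A]
    (Φ : Config A D → Config A D) (r : ℕ) (hΦ : IsCA Φ r)
    (S : Set (Config A D)) (hS : IsSubshift S)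
    (himg : Φ '' S = S) (hinj : Set.InjOn Φ S)
    (a : Config A D) (ha : a ∈ tildeSet S) (hna : a ∉ S)
    (hess : ¬ Removable S a) :
    Φ a ∉ S ∧ ∀ t : ℕ, Φ^[t] a ∉ S :=
  essential_defect_persistent_general Φ r hΦ S hS himg hinj a hess
end

section
/- Let 𝔄 ⊆ A^ℤ be a one-dimensional subshift of finite type. Then the ℤ-shift on 𝔄 is topologically mixing if and only if no finite defect of 𝔄 is essential (i.e. every a ∈ 𝔄~ with lim_{|z|→∞} F_a(z) = ∞ has a removable defect). -/
/-!
Everything is built from one operation: two configurations that carry the same word of length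
`2r` at a common place can be spliced there, and the result again satisfies the local rule.

If the shift is mixing, then, since there are only finitely many words, any two words that occur
can be joined across every gap longer than some uniform `N`. A finite defect is removed by keeping
`a` far away from it and joining its two far sides by such a bridge.

Conversely, the configuration that follows `a` on the left and `b` on the right has a finite
defect, and removing it links far-left words of `a` to far-right words of `b`. Applied to a
periodic configuration of period `ℓ` and its translate by one, this yields two cycles through
the same word whose lengths `ℓ` and `1 + kℓ` are coprime, hence cycles of every large length;
composing paths then gives mixing.
-/

open Topology MeasureTheory

open Set

namespace SFT

variable {A : Type*}

def site (z : ℤ) : Fin 1 → ℤ := fun _ => z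

lemma site_eta (v : Fin 1 → ℤ) : site (v 0) = v :=
  funext fun i => by rw [Subsingleton.elim i 0]; rfl

@[simp] lemma site_apply (z : ℤ) (i : Fin 1) : site z i = z := rfl

@[simp] lemma site_add (y z : ℤ) : site y + site z = site (y + z) := rfl

@[simp] lemma normZ_site (z : ℤ) : normZ (site z) = z.natAbs := by
  simp [normZ, site]

@[simp] lemma shift_apply_site (x : Config A 1) (t z : ℤ) :
    shift (site t) x (site z) = x (site (z + t)) := rfl

lemma shift_shift (x : Config A 1) (s t : ℤ) :
    shift (site s) (shift (site t) x) = shift (site (s + t)) x := by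
  funext v
  exact congrArg x (add_assoc v _ _)

def IsLocalRule (r : ℕ) (P : Config A 1 → Prop) : Prop :=
  ∀ a b : Config A 1, (∀ w, normZ w ≤ r → a w = b w) → (P a ↔ P b)

def sft (P : Config A 1 → Prop) : Set (Config A 1) :=
  {a | ∀ z : Fin 1 → ℤ, P (shift z a)}

variable {r : ℕ} {P : Config A 1 → Prop}

lemma mem_sft_iff {x : Config A 1} : x ∈ sft P ↔ ∀ z : ℤ, P (shift (site z) x) :=
  ⟨fun h z => h (site z), fun h v => site_eta v ▸ h (v 0)⟩

lemma shift_mem_sft {x : Config A 1} (hx : x ∈ sft P) (t : ℤ) : shift (site t) x ∈ sft P :=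
  mem_sft_iff.2 fun z => by rw [shift_shift]; exact mem_sft_iff.1 hx _

lemma IsLocalRule.apply_shift_iff (hP : IsLocalRule r P) {x y : Config A 1} {z : ℤ}
    (h : ∀ d ∈ Icc (z - r) (z + r), x (site d) = y (site d)) :
    P (shift (site z) x) ↔ P (shift (site z) y) :=
  hP _ _ fun w hw => by
    rw [← site_eta w] at hw ⊢
    rw [normZ_site] at hw
    exact h (w 0 + z) ⟨by omega, by omega⟩

def word (r : ℕ) (x : Config A 1) (i : ℤ) : Fin (2 * r) → A :=
  fun j => x (site (i + j))

lemma word_shift (x : Config A 1) (t i : ℤ) : word r (shift (site t) x) i = word r x (i + t) := by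
  funext j
  simp only [word, shift_apply_site]
  ring_nf

lemma word_eq_word_iff {x y : Config A 1} {i j : ℤ} :
    word r x i = word r y j ↔ ∀ z ∈ Ico i (i + 2 * r), x (site z) = y (site (z - i + j)) := by
  constructor
  · rintro h z ⟨hz₁, hz₂⟩
    have := congrFun h ⟨(z - i).toNat, by omega⟩
    simp only [word] at this
    convert this using 3 <;> omega
  · intro h
    funext k
    have := h (i + k) ⟨by omega, by omega⟩
    simp only [word, this]
    ring_nf

lemma word_eq_of_forall_lt {x y : Config A 1} {i k : ℤ}
    (h : ∀ z < i, x (site z) = y (site z)) (hk : k + 2 * r ≤ i) : word r x k = word r y k :=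
  funext fun l => h _ (by omega)

lemma word_eq_of_forall_ge {x y : Config A 1} {i j k : ℤ}
    (h : ∀ z ≥ i, x (site z) = y (site (z - i + j))) (hk : i ≤ k) :
    word r x k = word r y (k - i + j) := by
  funext l
  simp only [word]
  rw [h _ (by omega)]
  ring_nf

def splice (c : ℤ) (x y : Config A 1) : Config A 1 :=
  fun v => if v 0 < c then x v else y v

lemma IsLocalRule.splice_mem_sft (hP : IsLocalRule r P) {x y : Config A 1} {c : ℤ}
    (hx : ∀ z < c, P (shift (site z) x)) (hy : ∀ z ≥ c, P (shift (site z) y))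
    (hxy : ∀ z ∈ Ico (c - r) (c + r), x (site z) = y (site z)) :
    splice c x y ∈ sft P := by
  refine mem_sft_iff.2 fun z => ?_
  rcases lt_or_ge z c with hz | hz
  · refine (hP.apply_shift_iff fun d ⟨_, hd⟩ => ?_).2 (hx z hz)
    by_cases hdc : d < c
    · simp [splice, hdc]
    · simp only [splice, site_apply, hdc, if_false]
      exact (hxy d ⟨by omega, by omega⟩).symm
  · refine (hP.apply_shift_iff fun d ⟨hd, _⟩ => ?_).2 (hy z hz)
    by_cases hdc : d < c
    · simp only [splice, site_apply, hdc, if_true]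
      exact hxy d ⟨by omega, by omega⟩
    · simp [splice, hdc]

theorem IsLocalRule.exists_splice (hP : IsLocalRule r P) {a b : Config A 1} {i j : ℤ}
    (ha : ∀ z < i + r, P (shift (site z) a)) (hb : ∀ z ≥ j + r, P (shift (site z) b))
    (hab : word r a i = word r b j) :
    ∃ x ∈ sft P, (∀ z < i + 2 * r, x (site z) = a (site z)) ∧
      ∀ z ≥ i, x (site z) = b (site (z - i + j)) := by
  set b' := shift (site (j - i)) b
  have hagree : ∀ z ∈ Ico i (i + 2 * r), a (site z) = b' (site z) := fun z hz => by
    simpa [b', sub_add_eq_add_sub, add_sub_assoc] using word_eq_word_iff.1 hab z hz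
  refine ⟨splice (i + r) a b', hP.splice_mem_sft ha (fun z hz => ?_) fun z ⟨hz₁, hz₂⟩ => ?_,
    fun z hz => ?_, fun z hz => ?_⟩
  · rw [shift_shift]; exact hb _ (by omega)
  · exact hagree z ⟨by omega, by omega⟩
  · by_cases h : z < i + r
    · simp [splice, h]
    · simp only [splice, site_apply, h, if_false]
      exact (hagree z ⟨by omega, hz⟩).symm
  · have : b' (site z) = b (site (z - i + j)) := by simp only [b', shift_apply_site]; ring_nf
    rw [← this]
    by_cases h : z < i + r
    · simp only [splice, site_apply, h, if_true]
      exact hagree z ⟨hz, by omega⟩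
    · simp [splice, h]

lemma IsLocalRule.exists_splice_of_mem (hP : IsLocalRule r P) {a b : Config A 1} {i j : ℤ}
    (ha : a ∈ sft P) (hb : b ∈ sft P) (hab : word r a i = word r b j) :
    ∃ x ∈ sft P, (∀ z < i + 2 * r, x (site z) = a (site z)) ∧
      ∀ z ≥ i, x (site z) = b (site (z - i + j)) :=
  hP.exists_splice (fun z _ => mem_sft_iff.1 ha z) (fun z _ => mem_sft_iff.1 hb z) hab

def Linked (S : Set (Config A 1)) (m : ℕ) (u v : Fin (2 * r) → A) : Prop :=
  ∃ x ∈ S, word r x 0 = u ∧ word r x m = v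

lemma linked_word {x : Config A 1} (hx : x ∈ sft P) (i : ℤ) (m : ℕ) :
    Linked (sft P) m (word r x i) (word r x (i + m)) :=
  ⟨shift (site i) x, shift_mem_sft hx i, by rw [word_shift, zero_add],
    by rw [word_shift, add_comm]⟩

lemma Linked.zero_left {S : Set (Config A 1)} {m : ℕ} {u v : Fin (2 * r) → A}
    (h : Linked S m u v) : Linked S 0 u u :=
  let ⟨x, hx, hu, _⟩ := h
  ⟨x, hx, hu, hu⟩

theorem IsLocalRule.exists_glue_of_linked (hP : IsLocalRule r P) {a b : Config A 1}
    {i j : ℤ} {m : ℕ} (ha : a ∈ sft P) (hb : b ∈ sft P)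
    (h : Linked (sft P) m (word r a i) (word r b j)) :
    ∃ x ∈ sft P, (∀ z < i + 2 * r, x (site z) = a (site z)) ∧
      ∀ z ≥ i + m, x (site z) = b (site (z - (i + m) + j)) := by
  obtain ⟨y, hy, hya, hyb⟩ := h
  obtain ⟨x₁, hx₁, hx₁a, hx₁y⟩ := hP.exists_splice_of_mem ha hy hya.symm
  have hx₁b : word r x₁ (i + m) = word r b j := by
    rw [word_eq_of_forall_ge hx₁y (by omega), ← hyb]
    ring_nf
  obtain ⟨x, hx, hxx₁, hxb⟩ := hP.exists_splice_of_mem hx₁ hb hx₁b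
  exact ⟨x, hx, fun z hz => by rw [hxx₁ z (by omega), hx₁a z hz], hxb⟩

theorem IsLocalRule.linked_trans (hP : IsLocalRule r P) {m m' : ℕ}
    {u v w : Fin (2 * r) → A} (h : Linked (sft P) m u v) (h' : Linked (sft P) m' v w) :
    Linked (sft P) (m + m') u w := by
  obtain ⟨x, hx, rfl, hxv⟩ := h
  obtain ⟨y, hy, hyv, rfl⟩ := h'
  obtain ⟨z, hz, hzx, hzy⟩ := hP.exists_splice_of_mem hx hy (hxv.trans hyv.symm)
  refine ⟨z, hz, word_eq_of_forall_lt hzx (by omega), ?_⟩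
  rw [word_eq_of_forall_ge hzy (by omega)]
  push_cast
  ring_nf

theorem IsLocalRule.eventually_linked_self (hP : IsLocalRule r P) {ω : Fin (2 * r) → A}
    {m₁ m₂ : ℕ} (h₁ : Linked (sft P) m₁ ω ω) (h₂ : Linked (sft P) m₂ ω ω)
    (hcop : Nat.Coprime m₁ m₂) : ∃ N, ∀ m ≥ N, Linked (sft P) m ω ω := by
  set lengths := {m | Linked (sft P) m ω ω}
  have hgcd : Nat.setGcd lengths ∣ 1 :=
    hcop ▸ Nat.dvd_gcd (Nat.setGcd_dvd_of_mem h₁) (Nat.setGcd_dvd_of_mem h₂)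
  obtain ⟨N, hN⟩ := Nat.exists_mem_closure_of_ge (s := lengths)
  exact ⟨N, fun m hm => AddSubmonoid.closure_induction (fun _ h => h) h₁.zero_left
    (fun _ _ _ _ => hP.linked_trans) (hN m hm (hgcd.trans (one_dvd m)))⟩

lemma forall_normZ_le_iff {x y : Config A 1} {z : ℤ} {R : ℕ} :
    (∀ w, normZ w ≤ R → x (site z + w) = y (site z + w)) ↔
      ∀ d ∈ Icc (z - R) (z + R), x (site d) = y (site d) := by
  constructor
  · rintro h d ⟨hd₁, hd₂⟩
    simpa using h (site (d - z)) (by rw [normZ_site]; omega)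
  · intro h w hw
    rw [← site_eta w, site_add]
    rw [← site_eta w, normZ_site] at hw
    exact h _ ⟨by omega, by omega⟩

lemma le_defectField {S : Set (Config A 1)} {a b : Config A 1} (hb : b ∈ S) {z : ℤ} {R : ℕ}
    (h : ∀ d ∈ Icc (z - R) (z + R), b (site d) = a (site d)) :
    (R : ℕ∞) ≤ defectField S a (site z) :=
  le_iSup₂_of_le (f := fun (R : ℕ) _ => (R : ℕ∞)) R ⟨b, hb, forall_normZ_le_iff.2 h⟩ le_rfl

lemma exists_eqOn_of_le_defectField {S : Set (Config A 1)} {a : Config A 1} {z : ℤ} {R : ℕ}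
    (hR : 0 < R) (h : (R : ℕ∞) ≤ defectField S a (site z)) :
    ∃ b ∈ S, ∀ d ∈ Icc (z - R) (z + R), b (site d) = a (site d) := by
  by_contra hno
  have hbound : defectField S a (site z) ≤ (R - 1 : ℕ) := by
    refine iSup₂_le fun R' ⟨b, hb, hba⟩ => Nat.cast_le.2 ?_
    by_contra! hR'
    exact hno ⟨b, hb, fun d ⟨hd₁, hd₂⟩ => forall_normZ_le_iff.1 hba d ⟨by omega, by omega⟩⟩
  have := Nat.cast_le.1 (h.trans hbound)
  omega

lemma IsLocalRule.mem_sft_of_defectField_eq_top (hP : IsLocalRule r P) {a : Config A 1}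
    {z : ℤ} (h : defectField (sft P) a (site z) = ⊤) : a ∈ sft P := by
  refine mem_sft_iff.2 fun y => ?_
  obtain ⟨b, hb, hba⟩ := exists_eqOn_of_le_defectField (R := (y - z).natAbs + r + 1)
    (Nat.succ_pos _) (h ▸ le_top)
  exact (hP.apply_shift_iff fun d ⟨hd₁, hd₂⟩ => (hba d ⟨by omega, by omega⟩).symm).2
    (mem_sft_iff.1 hb y)

def HasFiniteDefect (S : Set (Config A 1)) (a : Config A 1) : Prop :=
  ∀ R : ℕ, ∃ M : ℕ, ∀ z : Fin 1 → ℤ, M ≤ normZ z → (R : ℕ∞) ≤ defectField S a z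

def IsMixingShift [TopologicalSpace A] (S : Set (Config A 1)) : Prop :=
  ∀ U V : Set (Config A 1), IsOpen U → IsOpen V → (U ∩ S).Nonempty → (V ∩ S).Nonempty →
    ∃ N : ℕ, ∀ n ≥ N, ((shift (fun _ => (n : ℤ)) '' (U ∩ S)) ∩ (V ∩ S)).Nonempty

lemma isOpen_setOf_word_eq [TopologicalSpace A] [DiscreteTopology A] (u : Fin (2 * r) → A) :
    IsOpen {x : Config A 1 | word r x 0 = u} :=
  (continuous_pi fun _ => continuous_apply _).isOpen_preimage (f := fun x => word r x 0) {u}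
    (isOpen_discrete _)

lemma IsMixingShift.eventually_linked [TopologicalSpace A] [DiscreteTopology A]
    {S : Set (Config A 1)} (h : IsMixingShift S) {u v : Fin (2 * r) → A}
    (hu : Linked S 0 u u) (hv : Linked S 0 v v) : ∃ N, ∀ n ≥ N, Linked S n u v := by
  obtain ⟨x, hx, hxu, -⟩ := hu
  obtain ⟨y, hy, hyv, -⟩ := hv
  obtain ⟨N, hN⟩ := h _ _ (isOpen_setOf_word_eq u) (isOpen_setOf_word_eq v) ⟨x, hxu, hx⟩
    ⟨y, hyv, hy⟩
  refine ⟨N, fun n hn => ?_⟩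
  obtain ⟨_, ⟨x', ⟨hx'u, hx'⟩, rfl⟩, hx'v, -⟩ := hN n hn
  exact ⟨x', hx', hx'u, by rw [← zero_add (n : ℤ), ← word_shift]; exact hx'v⟩

lemma IsMixingShift.exists_uniform_linked [Fintype A] [TopologicalSpace A] [DiscreteTopology A]
    {S : Set (Config A 1)} (h : IsMixingShift S) (r : ℕ) :
    ∃ N, ∀ u v : Fin (2 * r) → A, Linked S 0 u u → Linked S 0 v v → ∀ n ≥ N, Linked S n u v := by
  classical
  have hpair (u v : Fin (2 * r) → A) :
      ∃ N, Linked S 0 u u → Linked S 0 v v → ∀ n ≥ N, Linked S n u v :=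
    if huv : Linked S 0 u u ∧ Linked S 0 v v then
      (h.eventually_linked huv.1 huv.2).imp fun _ hN _ _ => hN
    else ⟨0, fun hu hv => (huv ⟨hu, hv⟩).elim⟩
  choose N hN using hpair
  refine ⟨Finset.univ.sup fun uv : (Fin (2 * r) → A) × (Fin (2 * r) → A) => N uv.1 uv.2,
    fun u v hu hv n hn => hN u v hu hv n (le_trans ?_ hn)⟩
  exact Finset.le_sup (f := fun uv => N uv.1 uv.2) (Finset.mem_univ (u, v))

theorem IsLocalRule.exists_mem_sft_eq_of_natAbs_gt (hP : IsLocalRule r P) {N : ℕ}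
    (hN : ∀ u v : Fin (2 * r) → A, Linked (sft P) 0 u u → Linked (sft P) 0 v v →
      ∀ n ≥ N, Linked (sft P) n u v)
    {a : Config A 1} {M : ℕ}
    (ha : ∀ z : ℤ, M ≤ z.natAbs → ∃ b ∈ sft P, ∀ d ∈ Icc (z - r) (z + r), b (site d) = a (site d)) :
    ∃ a' ∈ sft P, ∀ z : ℤ, M + N < z.natAbs → a' (site z) = a (site z) := by
  have hvalid (z : ℤ) (hz : M ≤ z.natAbs) : P (shift (site z) a) := by
    obtain ⟨b, hb, hba⟩ := ha z hz
    exact (hP.apply_shift_iff fun d hd => (hba d hd).symm).2 (mem_sft_iff.1 hb z)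
  have hword (i : ℤ) (hi : M ≤ (i + r).natAbs) : Linked (sft P) 0 (word r a i) (word r a i) := by
    obtain ⟨b, hb, hba⟩ := ha (i + r) hi
    have hab : word r b i = word r a i := word_eq_word_iff.2 fun z ⟨hz₁, hz₂⟩ => by
      rw [sub_add_cancel]
      exact hba z ⟨by omega, by omega⟩
    simpa [hab] using linked_word (r := r) hb i 0
  set i₁ : ℤ := -(M + r)
  set i₂ : ℤ := M + N
  obtain ⟨y, hy, hy₁, hy₂⟩ := hN _ _ (hword i₁ (by omega)) (hword i₂ (by omega))
    (2 * M + N + r) (by omega)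
  obtain ⟨x₁, hx₁, hx₁a, hx₁y⟩ :=
    hP.exists_splice (fun z hz => hvalid z (by omega)) (fun z _ => mem_sft_iff.1 hy z) hy₁.symm
  have hx₁i₂ : word r x₁ i₂ = word r a i₂ := by
    rw [word_eq_of_forall_ge hx₁y (by omega), ← hy₂]
    congr 1
    simp only [i₁, i₂]
    push_cast
    ring
  obtain ⟨x, hx, hxx₁, hxa⟩ := hP.exists_splice (fun z _ => mem_sft_iff.1 hx₁ z)
    (fun z hz => hvalid z (by omega)) hx₁i₂
  refine ⟨x, hx, fun z hz => ?_⟩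
  rcases lt_or_ge z 0 with hz₀ | hz₀
  · rw [hxx₁ z (by omega), hx₁a z (by omega)]
  · rw [hxa z (by omega), sub_add_cancel]

theorem IsMixingShift.removable [Fintype A] [TopologicalSpace A]
    [DiscreteTopology A] (hmix : IsMixingShift (sft P)) (hP : IsLocalRule r P) {a : Config A 1}
    (ha : HasFiniteDefect (sft P) a) : Removable (sft P) a := by
  obtain ⟨N, hN⟩ := hmix.exists_uniform_linked r
  obtain ⟨M, hM⟩ := ha (r + 1)
  obtain ⟨a', ha', ha'a⟩ := hP.exists_mem_sft_eq_of_natAbs_gt hN (M := M) fun z hz => by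
    obtain ⟨b, hb, hba⟩ :=
      exists_eqOn_of_le_defectField (Nat.succ_pos r) (hM (site z) (by rwa [normZ_site]))
    exact ⟨b, hb, fun d ⟨hd₁, hd₂⟩ => hba d ⟨by push_cast; omega, by push_cast; omega⟩⟩
  -- Either the defect field is infinite somewhere, and then `a` itself lies in `sft P`, or it is
  -- bounded by some `B` on the window `|z| ≤ M + N`, and then `Y_{B+1}(a)` avoids the window.
  obtain ⟨z₀, -, hz₀⟩ := (Finset.Icc (-(M + N : ℤ)) (M + N)).exists_max_image
    (fun z => defectField (sft P) a (site z)) (Finset.nonempty_Icc.2 (by omega))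
  cases hF : defectField (sft P) a (site z₀) with
  | top => exact ⟨1, one_pos, a, hP.mem_sft_of_defectField_eq_top hF, fun _ _ => rfl⟩
  | coe B =>
    refine ⟨B + 1, B.succ_pos, a', ha', fun v hv => ?_⟩
    rw [← site_eta v]
    refine ha'a _ (not_le.1 fun hle => ?_)
    have hvF := hz₀ (v 0) (Finset.mem_Icc.2 ⟨by omega, by omega⟩)
    rw [hF, site_eta] at hvF
    exact absurd (Nat.cast_le.1 ((show ((B + 1 : ℕ) : ℕ∞) ≤ _ from hv).trans hvF)) (by omega)

def NoEssentialFiniteDefect (S : Set (Config A 1)) : Prop :=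
  ∀ a ∈ tildeSet S, HasFiniteDefect S a → Removable S a

theorem NoEssentialFiniteDefect.exists_mem_eq_left_right {S : Set (Config A 1)}
    (hS : NoEssentialFiniteDefect S) {a b : Config A 1} (ha : a ∈ S) (hb : b ∈ S) :
    ∃ x ∈ S, ∃ t : ℕ, (∀ z < -(t : ℤ), x (site z) = a (site z)) ∧
      ∀ z ≥ (t : ℤ), x (site z) = b (site z) := by
  -- The splice of `a` and `b` at `1` is defective only near the origin.
  set c := splice 1 a b
  have hleft (z : ℤ) (R : ℕ) (hz : z + R < 1) : (R : ℕ∞) ≤ defectField S c (site z) :=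
    le_defectField ha fun d ⟨_, hd⟩ => by simp [c, splice, show d < 1 by omega]
  have hright (z : ℤ) (R : ℕ) (hz : 1 ≤ z - R) : (R : ℕ∞) ≤ defectField S c (site z) :=
    le_defectField hb fun d ⟨hd, _⟩ => by simp [c, splice, show ¬d < 1 by omega]
  have hc : c ∈ tildeSet S :=
    ENat.eq_top_iff_forall_ge.2 fun R => le_iSup_of_le (site (-R)) (hleft _ R (by omega))
  have hcfin : HasFiniteDefect S c := fun R => ⟨R + 1, fun v hv => by
    rw [← site_eta v] at hv ⊢
    rw [normZ_site] at hv
    rcases lt_or_ge (v 0) 0 with h | h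
    · exact hleft _ R (by omega)
    · exact hright _ R (by omega)⟩
  obtain ⟨t, -, x, hx, hxc⟩ := hS c hc hcfin
  refine ⟨x, hx, t + 1, fun z hz => ?_, fun z hz => ?_⟩
  · rw [hxc _ (hleft z t (by omega))]
    simp [c, splice, show z < 1 by omega]
  · rw [hxc _ (hright z t (by omega))]
    simp [c, splice, show ¬z < 1 by omega]

def periodize (p : ℤ) (ℓ : ℕ) (x : Config A 1) : Config A 1 :=
  fun v => x (site (p + (v 0 - p) % ℓ))

lemma periodize_apply_add_mul (p : ℤ) (ℓ : ℕ) (x : Config A 1) (z k : ℤ) :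
    periodize p ℓ x (site (z + ℓ * k)) = periodize p ℓ x (site z) := by
  simp only [periodize, site_apply, add_sub_right_comm, Int.add_mul_emod_self_left]

lemma periodize_apply_eq {p : ℤ} {ℓ : ℕ} {x : Config A 1} (hℓ : 2 * r < ℓ)
    (hx : word r x p = word r x (p + ℓ)) {z : ℤ} (hz : z ∈ Ico p (p + ℓ + 2 * r)) :
    periodize p ℓ x (site z) = x (site z) := by
  obtain ⟨hz₁, hz₂⟩ := hz
  simp only [periodize, site_apply]
  rcases lt_or_ge z (p + ℓ) with h | h
  · rw [Int.emod_eq_of_lt (by omega) (by omega)]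
    ring_nf
  · rw [show z - p = (z - ℓ - p) + ℓ * 1 by ring, Int.add_mul_emod_self_left,
      Int.emod_eq_of_lt (by omega) (by omega), show p + (z - ℓ - p) = z - ℓ by ring]
    convert word_eq_word_iff.1 hx (z - ℓ) ⟨by omega, by omega⟩ using 3
    ring

lemma word_periodize {p : ℤ} {ℓ : ℕ} {x : Config A 1} (hℓ : 2 * r < ℓ)
    (hx : word r x p = word r x (p + ℓ)) (k : ℤ) :
    word r (periodize p ℓ x) (p + ℓ * k) = word r x p := by
  funext j
  simp only [word]
  rw [show p + ℓ * k + j = p + j + ℓ * k by ring, periodize_apply_add_mul,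
    periodize_apply_eq hℓ hx ⟨by omega, by omega⟩]

lemma shift_periodize_add_mul (p : ℤ) (ℓ : ℕ) (x : Config A 1) (z k : ℤ) :
    shift (site (z + ℓ * k)) (periodize p ℓ x) = shift (site z) (periodize p ℓ x) := by
  funext v
  rw [← site_eta v]
  simp only [shift_apply_site, ← add_assoc, periodize_apply_add_mul]

lemma IsLocalRule.periodize_mem_sft (hP : IsLocalRule r P) {p : ℤ} {ℓ : ℕ} {x : Config A 1}
    (hx : x ∈ sft P) (hℓ : 2 * r < ℓ) (hxp : word r x p = word r x (p + ℓ)) :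
    periodize p ℓ x ∈ sft P := by
  refine mem_sft_iff.2 fun z => ?_
  set z' := p + r + (z - p - r) % ℓ
  have hz'₁ : p + r ≤ z' := by have := Int.emod_nonneg (z - p - r) (b := ℓ) (by omega); omega
  have hz'₂ : z' < p + r + ℓ := by have := Int.emod_lt_of_pos (z - p - r) (b := ℓ) (by omega); omega
  have hz : z = z' + ℓ * ((z - p - r) / ℓ) := by
    have := Int.emod_add_mul_ediv (z - p - r) ℓ
    omega
  rw [hz, shift_periodize_add_mul]
  exact (hP.apply_shift_iff fun d ⟨hd₁, hd₂⟩ =>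
    periodize_apply_eq hℓ hxp ⟨by omega, by omega⟩).2 (mem_sft_iff.1 hx z')

lemma exists_word_eq_word_add [Fintype A] (r : ℕ) :
    ∃ K : ℕ, ∀ (x : Config A 1) (c : ℤ),
      ∃ p ∈ Icc c (c + K), ∃ ℓ : ℕ, 2 * r < ℓ ∧ word r x p = word r x (p + ℓ) := by
  classical
  refine ⟨(2 * r + 1) * Fintype.card (Fin (2 * r) → A), fun x c => ?_⟩
  obtain ⟨t₁, t₂, hne, heq⟩ := Fintype.exists_ne_map_eq_of_card_lt
    (fun t : Fin (Fintype.card (Fin (2 * r) → A) + 1) => word r x (c + (2 * r + 1) * t))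
    (by simp)
  wlog hlt : t₁ < t₂ generalizing t₁ t₂
  · exact this t₂ t₁ hne.symm heq.symm (lt_of_le_of_ne (not_lt.1 hlt) hne.symm)
  have ht₁ := t₁.is_lt
  have hlt' : (t₁ : ℕ) < t₂ := hlt
  refine ⟨c + (2 * r + 1) * t₁, ⟨le_add_of_nonneg_right (by positivity), ?_⟩,
    (2 * r + 1) * (t₂ - t₁), ?_, ?_⟩
  · push_cast
    gcongr
    omega
  · exact Nat.lt_of_lt_of_le (Nat.lt_succ_self _) (Nat.le_mul_of_pos_right _ (by omega))
  · convert heq using 2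
    push_cast [Nat.cast_sub hlt'.le]
    ring

theorem IsLocalRule.exists_periodic [Fintype A] (hP : IsLocalRule r P) :
    ∃ K : ℕ, ∀ x ∈ sft P, ∀ c : ℤ, ∃ p ∈ Icc c (c + K), ∃ ℓ : ℕ, 0 < ℓ ∧
      ∃ y ∈ sft P, ∀ k : ℤ, word r y (p + ℓ * k) = word r x p := by
  obtain ⟨K, hK⟩ := exists_word_eq_word_add (A := A) r
  refine ⟨K, fun x hx c => ?_⟩
  obtain ⟨p, hp, ℓ, hℓ, hxp⟩ := hK x c
  exact ⟨p, hp, ℓ, by omega, periodize p ℓ x, hP.periodize_mem_sft hx hℓ hxp,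
    word_periodize hℓ hxp⟩

theorem NoEssentialFiniteDefect.exists_linked (hS : NoEssentialFiniteDefect (sft P))
    {y₁ y₂ : Config A 1} (hy₁ : y₁ ∈ sft P) (hy₂ : y₂ ∈ sft P) {p₁ p₂ : ℤ} {ℓ₁ ℓ₂ : ℕ}
    (hℓ₁ : 0 < ℓ₁) (hℓ₂ : 0 < ℓ₂) {ω₁ ω₂ : Fin (2 * r) → A}
    (h₁ : ∀ k : ℤ, word r y₁ (p₁ + ℓ₁ * k) = ω₁) (h₂ : ∀ k : ℤ, word r y₂ (p₂ + ℓ₂ * k) = ω₂)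
    (n : ℤ) :
    ∃ k₁ k₂ m : ℕ, (m : ℤ) = p₂ + n + ℓ₂ * k₂ - (p₁ - ℓ₁ * k₁) ∧ Linked (sft P) m ω₁ ω₂ := by
  obtain ⟨x, hx, t, hxy₁, hxy₂⟩ := hS.exists_mem_eq_left_right hy₁ (shift_mem_sft hy₂ (-n))
  set k₁ := (p₁ + t + 2 * r).toNat
  set k₂ := (t - p₂ - n).toNat
  have hk₁ : (k₁ : ℤ) ≤ ℓ₁ * k₁ := le_mul_of_one_le_left (by positivity) (by exact_mod_cast hℓ₁)
  have hk₂ : (k₂ : ℤ) ≤ ℓ₂ * k₂ := le_mul_of_one_le_left (by positivity) (by exact_mod_cast hℓ₂)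
  set g₁ := p₁ - ℓ₁ * k₁
  set g₂ := p₂ + n + ℓ₂ * k₂
  have hw₁ : word r x g₁ = ω₁ := by
    rw [word_eq_of_forall_lt hxy₁ (by omega), ← h₁ (-k₁)]
    congr 1
    simp only [g₁]
    ring
  have hw₂ : word r x g₂ = ω₂ := by
    have hxy₂' (z : ℤ) (hz : z ≥ t) : x (site z) = y₂ (site (z - t + (t - n))) := by
      rw [hxy₂ z hz, shift_apply_site]
      ring_nf
    rw [word_eq_of_forall_ge hxy₂' (by omega), ← h₂ k₂]
    congr 1
    simp only [g₂]
    ring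
  refine ⟨k₁, k₂, (g₂ - g₁).toNat, by omega, ?_⟩
  have := linked_word (r := r) hx g₁ (g₂ - g₁).toNat
  rwa [hw₁, show g₁ + ((g₂ - g₁).toNat : ℤ) = g₂ by omega, hw₂] at this

theorem NoEssentialFiniteDefect.eventually_linked [Fintype A]
    (hS : NoEssentialFiniteDefect (sft P)) (hP : IsLocalRule r P) {a b : Config A 1}
    (ha : a ∈ sft P) (hb : b ∈ sft P) (i j : ℤ) :
    ∃ N, ∀ m ≥ N, Linked (sft P) m (word r a i) (word r b j) := by
  obtain ⟨K, hK⟩ := hP.exists_periodic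
  obtain ⟨p, ⟨hp₁, -⟩, ℓ, hℓ, y, hy, hyp⟩ := hK a ha i
  obtain ⟨q, ⟨-, hq₂⟩, ℓ', hℓ', y', hy', hy'q⟩ := hK b hb (j - K)
  -- Gluing `y` to its translate by one closes a cycle of length `1` modulo the period `ℓ`.
  obtain ⟨k₁, k₂, c, hc, hcycle⟩ := hS.exists_linked hy hy hℓ hℓ hyp hyp 1
  have hperiod : Linked (sft P) ℓ (word r a p) (word r a p) := by
    have h₀ := hyp 0
    have h₁ := hyp 1
    rw [mul_zero, add_zero] at h₀
    rw [mul_one] at h₁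
    simpa [h₀, h₁] using linked_word (r := r) hy p ℓ
  have hcop : Nat.Coprime ℓ c := by
    have : c = 1 + (k₁ + k₂) * ℓ := by zify; rw [hc]; ring
    rw [this, Nat.coprime_add_mul_right_right]
    exact Nat.coprime_one_right ℓ
  obtain ⟨N, hN⟩ := hP.eventually_linked_self hperiod hcycle hcop
  obtain ⟨-, -, m₀, -, hbridge⟩ := hS.exists_linked hy hy' hℓ hℓ' hyp hy'q 0
  have hpre : Linked (sft P) (p - i).toNat (word r a i) (word r a p) := by
    have := linked_word (r := r) ha i (p - i).toNat
    rwa [show i + ((p - i).toNat : ℤ) = p by omega] at this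
  have hpost : Linked (sft P) (j - q).toNat (word r b q) (word r b j) := by
    have := linked_word (r := r) hb q (j - q).toNat
    rwa [show q + ((j - q).toNat : ℤ) = j by omega] at this
  refine ⟨(p - i).toNat + N + m₀ + (j - q).toNat, fun m hm => ?_⟩
  have := hP.linked_trans hpre <| hP.linked_trans
    (hN (m - ((p - i).toNat + m₀ + (j - q).toNat)) (by omega)) (hP.linked_trans hbridge hpost)
  convert this using 2
  omega

lemma exists_forall_eq_mem_of_isOpen [TopologicalSpace A] {U : Set (Config A 1)} (hU : IsOpen U)
    {a : Config A 1} (ha : a ∈ U) :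
    ∃ k : ℕ, ∀ x : Config A 1, (∀ z ∈ Icc (-k : ℤ) k, x (site z) = a (site z)) → x ∈ U := by
  obtain ⟨I, u, hu, hIU⟩ := isOpen_pi_iff.1 hU a ha
  refine ⟨I.sup normZ, fun x hx => hIU fun v hv => ?_⟩
  have hk : normZ v ≤ I.sup normZ := Finset.le_sup hv
  rw [← site_eta v, normZ_site] at hk
  rw [← site_eta v, hx _ ⟨by omega, by omega⟩, site_eta]
  exact (hu v hv).2

theorem NoEssentialFiniteDefect.isMixingShift [Fintype A] [TopologicalSpace A]
    (hS : NoEssentialFiniteDefect (sft P)) (hP : IsLocalRule r P) : IsMixingShift (sft P) := by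
  intro U V hU hV ⟨a, haU, ha⟩ ⟨b, hbV, hb⟩
  obtain ⟨kU, hkU⟩ := exists_forall_eq_mem_of_isOpen hU haU
  obtain ⟨kV, hkV⟩ := exists_forall_eq_mem_of_isOpen hV hbV
  set k := max kU kV
  obtain ⟨N, hN⟩ := hS.eventually_linked hP ha hb (k + 1) (-(k + 2 * r))
  refine ⟨N + (2 * k + 2 * r + 1), fun n hn => ?_⟩
  obtain ⟨x, hx, hxa, hxb⟩ :=
    hP.exists_glue_of_linked ha hb (hN (n - (2 * k + 2 * r + 1)) (by omega))
  refine ⟨shift (site n) x, ⟨x, ⟨hkU x fun z ⟨hz₁, hz₂⟩ => hxa z (by omega), hx⟩, rfl⟩,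
    hkV _ fun z ⟨hz₁, hz₂⟩ => ?_, shift_mem_sft hx n⟩
  rw [shift_apply_site, hxb _ (by omega)]
  congr 2
  omega

end SFT

/-- a one-dimensional SFT is topologically mixing iff no finite
defect is essential (every finite defect is removable). -/
theorem mixing_iff_no_finite_essential {A : Type*} [Fintype A]
    [TopologicalSpace A] [DiscreteTopology A]
    (r : ℕ) (P : Config A 1 → Prop)
    (hPloc : ∀ a b : Config A 1, (∀ w, normZ w ≤ r → a w = b w) → (P a ↔ P b))
    (S : Set (Config A 1)) (hSFT : S = {a | ∀ z : Fin 1 → ℤ, P (shift z a)}) :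
    ((∀ U V : Set (Config A 1), IsOpen U → IsOpen V →
        (U ∩ S).Nonempty → (V ∩ S).Nonempty →
        ∃ N : ℕ, ∀ n ≥ N,
          ((shift (fun _ => (n : ℤ)) '' (U ∩ S)) ∩ (V ∩ S)).Nonempty)
      ↔ (∀ a ∈ tildeSet S,
          (∀ R : ℕ, ∃ M : ℕ, ∀ z : Fin 1 → ℤ,
            M ≤ normZ z → (R : ℕ∞) ≤ defectField S a z) →
          Removable S a)) := by
  subst hSFT
  exact ⟨fun hmix _ _ ha => SFT.IsMixingShift.removable hmix hPloc ha,
    fun hS => SFT.NoEssentialFiniteDefect.isMixingShift hS hPloc⟩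
end

section
/- If 𝔄 ⊆ A^(ℤ^D) is a subshift carrying a shift-ergodic Borel probability measure μ with full support, then 𝔄 is projectively transitive: for any spacious set Y ⊆ ℤ^D (one containing balls of every radius) and any nonempty open O ⊆ 𝔄, the set ⋃_{y∈Y} σ^{−y}(O) is dense in 𝔄. -/
open Topology MeasureTheory

/-!
If an open set `U` meeting `S` avoided every `σ^{-y}(O) ∩ S` with `y ∈ Y`, ergodicity would give a
`v` for which `P = U ∩ S ∩ σ^{-v}(O ∩ S)` has positive measure, while `P ∩ σ^{-z} P` is null for
every `z ∈ Y - v`. Because `Y - v` contains a translate of every finite set, it contains all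
differences `w j - w i` (`i < j`) of some sequence `w`; the translates `σ^{-w i} P` are then
pairwise almost disjoint sets of the same positive measure, which a probability space cannot hold.
-/
open scoped Pointwise

/-- Thick sets of `ℤ^D` are the paper's spacious sets (`isThick_of_forall_ball_subset`). -/
def IsThick {G : Type*} [Add G] (Z : Set G) : Prop :=
  ∀ F : Finset G, ∃ g, ∀ f ∈ F, g + f ∈ Z

theorem IsThick.preimage_add_left {G : Type*} [AddGroup G] {Z : Set G} (hZ : IsThick Z) (v : G) :
    IsThick ((v + ·) ⁻¹' Z) := fun F => by
  obtain ⟨g, hg⟩ := hZ F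
  exact ⟨-v + g, fun f hf => by simpa [add_assoc] using hg f hf⟩

theorem IsThick.exists_seq_sub_mem {G : Type*} [AddGroup G] {Z : Set G} (hZ : IsThick Z) :
    ∃ w : ℕ → G, ∀ i j, i < j → w j - w i ∈ Z := by
  classical
  obtain ⟨w, -, hw⟩ := exists_seq_of_forall_finset_exists (fun _ : G => True)
    (fun x y => y - x ∈ Z) fun F _ => by
      obtain ⟨g, hg⟩ := hZ (-F)
      exact ⟨g, trivial, fun f hf => by simpa [sub_eq_add_neg] using hg (-f) (by simpa using hf)⟩
  exact ⟨w, hw⟩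

theorem isThick_of_forall_ball_subset {D : ℕ} {Y : Set (Fin D → ℤ)}
    (hY : ∀ r : ℕ, ∃ y : Fin D → ℤ, ∀ w, normZ w ≤ r → y + w ∈ Y) : IsThick Y := fun F => by
  obtain ⟨y, hy⟩ := hY (F.sup normZ)
  exact ⟨y, fun f hf => hy f (Finset.le_sup hf)⟩

namespace MeasureTheory

variable {X : Type*} [MeasurableSpace X] {μ : Measure X}

theorem exists_lt_measure_inter_ne_zero [IsFiniteMeasure μ] {s : ℕ → Set X}
    (hs : ∀ i, NullMeasurableSet (s i) μ) {c : ENNReal} (hc : c ≠ 0) (hμs : ∀ i, μ (s i) = c) :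
    ∃ i j, i < j ∧ μ (s i ∩ s j) ≠ 0 := by
  by_contra! h
  have hdisj : Pairwise (Function.onFun (AEDisjoint μ) s) := (Std.Symm.pairwise_on s).2 h
  have := measure_iUnion₀ hdisj hs
  simp only [hμs, ENNReal.tsum_const_eq_top_of_ne_zero hc] at this
  exact measure_ne_top μ _ this

variable {G : Type*} [AddGroup G] [AddAction G X]

theorem exists_measure_inter_preimage_vadd_ne_zero_of_isThick [IsFiniteMeasure μ]
    (hμ : ∀ g : G, MeasurePreserving (g +ᵥ · : X → X) μ μ) {Z : Set G} (hZ : IsThick Z)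
    {P : Set X} (hP : NullMeasurableSet P μ) (hP0 : μ P ≠ 0) :
    ∃ z ∈ Z, μ (P ∩ (z +ᵥ ·) ⁻¹' P) ≠ 0 := by
  obtain ⟨w, hw⟩ := hZ.exists_seq_sub_mem
  obtain ⟨i, j, hij, hne⟩ := exists_lt_measure_inter_ne_zero
    (fun i => hP.preimage (hμ (w i)).quasiMeasurePreserving) hP0
    (fun i => (hμ (w i)).measure_preimage hP)
  refine ⟨w j - w i, hw i j hij, ?_⟩
  have hpre : (w i +ᵥ · : X → X) ⁻¹' (P ∩ ((w j - w i) +ᵥ ·) ⁻¹' P) =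
      (w i +ᵥ ·) ⁻¹' P ∩ (w j +ᵥ ·) ⁻¹' P := by
    ext x
    simp [vadd_vadd]
  rwa [← hpre, (hμ (w i)).measure_preimage
    (hP.inter (hP.preimage (hμ _).quasiMeasurePreserving))] at hne

theorem exists_measure_inter_preimage_vadd_ne_zero_of_ergodic [Countable G]
    [IsProbabilityMeasure μ] (hmeas : ∀ g : G, Measurable (g +ᵥ · : X → X))
    (herg : ∀ T : Set X, MeasurableSet T → (∀ g : G, (g +ᵥ ·) ⁻¹' T = T) → μ T = 0 ∨ μ T = 1)
    {P Q : Set X} (hP0 : μ P ≠ 0) (hQ : MeasurableSet Q) (hQ0 : μ Q ≠ 0) :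
    ∃ g : G, μ (P ∩ (g +ᵥ ·) ⁻¹' Q) ≠ 0 := by
  set T := ⋃ g : G, (g +ᵥ ·) ⁻¹' Q
  have hTinv (h : G) : (h +ᵥ ·) ⁻¹' T = T := by
    simpa [T, Set.preimage_iUnion, Set.preimage_preimage, vadd_vadd] using
      (Equiv.addRight h).surjective.iUnion_comp fun g : G => (g +ᵥ · : X → X) ⁻¹' Q
  have hT0 : μ T ≠ 0 := fun h => hQ0 <| measure_mono_null
    (fun x hx => Set.mem_iUnion.2 ⟨0, by simpa using hx⟩) h
  have hT : MeasurableSet T := .iUnion fun g => hmeas g hQ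
  have hT1 : μ Tᶜ = 0 := by
    rw [prob_compl_eq_zero_iff hT]
    exact (herg T hT hTinv).resolve_left hT0
  rw [← measure_inter_conull hT1, Set.inter_iUnion] at hP0
  by_contra! h
  exact hP0 (measure_iUnion_null h)

end MeasureTheory

abbrev shiftAddAction (A : Type*) (D : ℕ) : AddAction (Fin D → ℤ) (Config A D) where
  vadd := shift
  zero_vadd a := funext fun z => congrArg a (add_zero z)
  add_vadd v w a := funext fun z => congrArg a (add_assoc z v w).symm

theorem ergodic_full_support_projectively_transitive_general {A : Type*} {D : ℕ}
    [TopologicalSpace A]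
    [MeasurableSpace (Config A D)] [BorelSpace (Config A D)]
    (S : Set (Config A D)) (hS : IsSubshift S)
    (μ : Measure (Config A D)) [IsProbabilityMeasure μ]
    (hinv : ∀ v : Fin D → ℤ, MeasurePreserving (shift v) μ μ)
    (herg : ∀ T : Set (Config A D), MeasurableSet T →
      (∀ v : Fin D → ℤ, shift v ⁻¹' T = T) → μ T = 0 ∨ μ T = 1)
    (hfull : ∀ U : Set (Config A D), IsOpen U → (U ∩ S).Nonempty →
      0 < μ (U ∩ S))
    (Y : Set (Fin D → ℤ))
    (hY : ∀ r : ℕ, ∃ y : Fin D → ℤ, ∀ w, normZ w ≤ r → y + w ∈ Y)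
    (O : Set (Config A D)) (hO : IsOpen O) (hOne : (O ∩ S).Nonempty) :
    S ⊆ closure (S ∩ ⋃ y ∈ Y, {a | shift y a ∈ O}) := by
  let := shiftAddAction A D
  intro a ha
  refine mem_closure_iff.2 fun U hU haU => ?_
  have hSm : MeasurableSet S := hS.1.measurableSet
  have hQm : MeasurableSet (O ∩ S) := hO.measurableSet.inter hSm
  obtain ⟨v, hv⟩ := exists_measure_inter_preimage_vadd_ne_zero_of_ergodic
    (fun v => (hinv v).measurable) herg (hfull U hU ⟨a, haU, ha⟩).ne' hQm (hfull O hO hOne).ne'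
  obtain ⟨z, hzY, hz⟩ := exists_measure_inter_preimage_vadd_ne_zero_of_isThick hinv
    ((isThick_of_forall_ball_subset hY).preimage_add_left v)
    ((hU.measurableSet.inter hSm).inter ((hinv v).measurable hQm)).nullMeasurableSet hv
  obtain ⟨b, ⟨⟨hbU, hbS⟩, -⟩, -, hb⟩ := nonempty_of_measure_ne_zero hz
  have hbO : (v + z) +ᵥ b ∈ O := by
    rw [← vadd_vadd]
    exact hb.1
  exact ⟨b, hbU, hbS, Set.mem_biUnion hzY hbO⟩

/-- a subshift carrying a fully supported shift-ergodic
probability measure is projectively transitive. -/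
theorem ergodic_full_support_projectively_transitive {A : Type*} {D : ℕ}
    [Fintype A] [TopologicalSpace A] [DiscreteTopology A]
    [MeasurableSpace (Config A D)] [BorelSpace (Config A D)]
    (S : Set (Config A D)) (hS : IsSubshift S)
    (μ : Measure (Config A D)) [IsProbabilityMeasure μ]
    (hμS : μ S = 1)
    (hinv : ∀ v : Fin D → ℤ, MeasurePreserving (shift v) μ μ)
    (herg : ∀ T : Set (Config A D), MeasurableSet T →
      (∀ v : Fin D → ℤ, shift v ⁻¹' T = T) → μ T = 0 ∨ μ T = 1)
    (hfull : ∀ U : Set (Config A D), IsOpen U → (U ∩ S).Nonempty →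
      0 < μ (U ∩ S))
    (Y : Set (Fin D → ℤ))
    (hY : ∀ r : ℕ, ∃ y : Fin D → ℤ, ∀ w, normZ w ≤ r → y + w ∈ Y)
    (O : Set (Config A D)) (hO : IsOpen O) (hOne : (O ∩ S).Nonempty) :
    S ⊆ closure (S ∩ ⋃ y ∈ Y, {a | shift y a ∈ O}) :=
  ergodic_full_support_projectively_transitive_general S hS μ hinv herg hfull Y hY O hO hOne
end
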